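/- arXiv:1610.04122 — 2 statements merged into one kernel-verified Lean document; each statement's English description precedes it below -/
import Mathlib

section
/- Every irreducible B_n-submodule of V is 1-dimensional and equals F·v_{{1,...,k}} for some 0 ≤ k ≤ n. -/
open Finset

/-- `f : Fin n → Option (Fin n)` represents an injective partial map of `{1,…,n}`
(elements 0-indexed): `f a = some x` means `a ∈ D(f)` with image `x`. Injectivity: -/
def IsPartialInj {n : ℕ} (f : Fin n → Option (Fin n)) : Prop :=
  ∀ a b x, f a = some x → f b = some x → a = b

/-- order preserving: `a < b` in the domain implies `f a < f b`. -/
def IsOrderPres {n : ℕ} (f : Fin n → Option (Fin n)) : Prop :=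
  ∀ a b x y, a < b → f a = some x → f b = some y → x < y

/-- order decreasing: `f a ≤ a` on the domain. -/
def IsOrderDec {n : ℕ} (f : Fin n → Option (Fin n)) : Prop :=
  ∀ a x, f a = some x → x ≤ a

/-- The planar upper triangular rook monoid `B_n`: order-preserving,
order-decreasing injective partial maps of `{1,…,n}`. -/
def Bn (n : ℕ) : Set (Fin n → Option (Fin n)) :=
  {f | IsPartialInj f ∧ IsOrderPres f ∧ IsOrderDec f}

/-- domain of the partial map. -/
def domf {n : ℕ} (f : Fin n → Option (Fin n)) : Finset (Fin n) :=
  Finset.univ.filter (fun a => (f a).isSome)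

/-- image of a finite set under the partial map. -/
def fimg {n : ℕ} (f : Fin n → Option (Fin n)) (S : Finset (Fin n)) : Finset (Fin n) :=
  S.biUnion (fun a => (f a).toFinset)

/-- the linear action of a partial map `f` on `V = ⊕_{S ⊆ n} F·v_S`:
`f · v_S = v_{f(S)}` if `S ⊆ D(f)`, and `0` otherwise. -/
noncomputable def actMap (F : Type*) [Field F] {n : ℕ} (f : Fin n → Option (Fin n)) :
    (Finset (Fin n) →₀ F) →ₗ[F] (Finset (Fin n) →₀ F) :=
  Finsupp.lsum F (fun S => if S ⊆ domf f then Finsupp.lsingle (fimg f S) else 0)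

/-- a subspace `W` of `V` is a `B_n`-submodule if it is invariant under the action. -/
def IsBnSub {n : ℕ} {F : Type*} [Field F] (W : Submodule F (Finset (Fin n) →₀ F)) : Prop :=
  ∀ f ∈ Bn n, ∀ v ∈ W, actMap F f v ∈ W

/-- the `B_n`-submodule of `V` generated by a vector `v`. -/
noncomputable def genMod (F : Type*) [Field F] {n : ℕ} (v : Finset (Fin n) →₀ F) :
    Submodule F (Finset (Fin n) →₀ F) :=
  sInf {W | IsBnSub W ∧ v ∈ W}

/-- `V_k`, the span of the `v_S` with `|S| = k`. -/
noncomputable def VK (F : Type*) [Field F] (n k : ℕ) : Submodule F (Finset (Fin n) →₀ F) :=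
  Submodule.span F {w | ∃ S : Finset (Fin n), S.card = k ∧ w = Finsupp.single S (1 : F)}

/-- the subset `{1, …, k}` of `{1, …, n}` (0-indexed: the `k` smallest elements). -/
def boldK (n k : ℕ) : Finset (Fin n) := Finset.univ.filter (fun a => a.val < k)

/-- `W` is an irreducible `B_n`-submodule of `V`. -/
def IsIrred {n : ℕ} {F : Type*} [Field F] (W : Submodule F (Finset (Fin n) →₀ F)) : Prop :=
  IsBnSub W ∧ W ≠ ⊥ ∧ ∀ U : Submodule F (Finset (Fin n) →₀ F),
    IsBnSub U → U ≤ W → U = ⊥ ∨ U = W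

/-!
Take a nonzero `v ∈ W` and a set `S` of minimal size in its support. The partial identity on `S`
kills every other `v_T` in the support (no such `T` is contained in `S`), so `v_S ∈ W`; the map
sending each element of `S` to its rank in `S` then moves `v_S` to `v_{{1,…,|S|}}`. This last
vector spans a `B_n`-submodule, because an order-decreasing injection defined on `{1,…,k}` maps
it onto itself, and irreducibility forces `W` to be that line.
-/

section PartialMaps

variable {n : ℕ}

lemma mem_domf {f : Fin n → Option (Fin n)} {a : Fin n} :
    a ∈ domf f ↔ ∃ x, f a = some x := by
  simp [domf, Option.isSome_iff_exists]

lemma mem_fimg {f : Fin n → Option (Fin n)} {S : Finset (Fin n)} {x : Fin n} :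
    x ∈ fimg f S ↔ ∃ a ∈ S, f a = some x := by
  simp [fimg, Option.mem_toFinset, Option.mem_def]

lemma IsOrderPres.isPartialInj {f : Fin n → Option (Fin n)} (hf : IsOrderPres f) :
    IsPartialInj f := by
  intro a b x ha hb
  by_contra hab
  rcases lt_or_gt_of_ne hab with h | h
  · exact lt_irrefl x (hf a b x x h ha hb)
  · exact lt_irrefl x (hf b a x x h hb ha)

lemma card_fimg {f : Fin n → Option (Fin n)} (hf : IsPartialInj f)
    {S : Finset (Fin n)} (hS : S ⊆ domf f) : #(fimg f S) = #S := by
  rw [fimg, card_biUnion]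
  · refine (sum_congr rfl fun a ha => ?_).trans (card_eq_sum_ones S).symm
    obtain ⟨x, hx⟩ := mem_domf.1 (hS ha)
    simp [hx]
  · intro a _ b _ hab
    refine disjoint_left.2 fun x hxa hxb => hab (hf a b x ?_ ?_)
    · simpa only [Option.mem_toFinset, Option.mem_def] using hxa
    · simpa only [Option.mem_toFinset, Option.mem_def] using hxb

lemma card_boldK {k : ℕ} (hk : k ≤ n) : #(boldK n k) = k := by
  have : boldK n k = (univ : Finset (Fin k)).map (Fin.castLEEmb hk) := by
    ext a
    simp only [boldK, mem_filter, mem_univ, true_and, mem_map, Fin.castLEEmb_apply]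
    exact ⟨fun ha => ⟨⟨a, ha⟩, rfl⟩, by rintro ⟨b, rfl⟩; exact b.isLt⟩
  rw [this, card_map, card_univ, Fintype.card_fin]

lemma fimg_boldK {k : ℕ} {f : Fin n → Option (Fin n)} (hinj : IsPartialInj f)
    (hdec : IsOrderDec f) (hd : boldK n k ⊆ domf f) : fimg f (boldK n k) = boldK n k := by
  refine eq_of_subset_of_card_le (fun x hx => ?_) (card_fimg hinj hd).ge
  obtain ⟨a, ha, hax⟩ := mem_fimg.1 hx
  simp only [boldK, mem_filter, mem_univ, true_and] at ha ⊢
  exact (Fin.le_def.1 (hdec a x hax)).trans_lt ha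

def partialId (S : Finset (Fin n)) : Fin n → Option (Fin n) :=
  fun a => if a ∈ S then some a else none

lemma partialId_mem_Bn (S : Finset (Fin n)) : partialId S ∈ Bn n := by
  have hpres : IsOrderPres (partialId S) := by
    intro a b x y hab ha hb
    simp only [partialId] at ha hb
    split_ifs at ha hb
    cases ha; cases hb; exact hab
  refine ⟨hpres.isPartialInj, hpres, fun a x ha => ?_⟩
  simp only [partialId] at ha
  split_ifs at ha
  cases ha; exact le_rfl

lemma domf_partialId (S : Finset (Fin n)) : domf (partialId S) = S := by
  ext a; by_cases h : a ∈ S <;> simp [mem_domf, partialId, h]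

lemma fimg_partialId (S : Finset (Fin n)) : fimg (partialId S) S = S := by
  ext x
  simp only [mem_fimg, partialId]
  constructor
  · rintro ⟨a, ha, hax⟩
    rw [if_pos ha, Option.some_inj] at hax
    rwa [← hax]
  · exact fun hx => ⟨x, hx, if_pos hx⟩

lemma card_filter_lt_le (S : Finset (Fin n)) (a : Fin n) : #(S.filter (· < a)) ≤ a :=
  calc #(S.filter (· < a)) ≤ #(Iio a) := card_le_card fun x hx => by simpa using (mem_filter.1 hx).2
    _ = a := Fin.card_Iio a

/-- The order isomorphism `S ≃o {1,…,|S|}` as a partial map: `a ∈ S` goes to its 0-indexed rank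
in `S`. -/
def rankMap (S : Finset (Fin n)) : Fin n → Option (Fin n) :=
  fun a => if a ∈ S then some ⟨#(S.filter (· < a)), (card_filter_lt_le S a).trans_lt a.isLt⟩
    else none

lemma rankMap_isOrderPres (S : Finset (Fin n)) : IsOrderPres (rankMap S) := by
  intro a b x y hab ha hb
  simp only [rankMap] at ha hb
  split_ifs at ha hb with haS
  cases ha; cases hb
  rw [Fin.mk_lt_mk]
  refine card_lt_card ⟨fun z hz => ?_, fun hsub => ?_⟩
  · simp only [mem_filter] at hz ⊢
    exact ⟨hz.1, hz.2.trans hab⟩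
  · simpa using hsub (mem_filter.2 ⟨haS, hab⟩)

lemma rankMap_mem_Bn (S : Finset (Fin n)) : rankMap S ∈ Bn n := by
  refine ⟨(rankMap_isOrderPres S).isPartialInj, rankMap_isOrderPres S, fun a x ha => ?_⟩
  simp only [rankMap] at ha
  split_ifs at ha
  cases ha
  exact card_filter_lt_le S a

lemma domf_rankMap (S : Finset (Fin n)) : domf (rankMap S) = S := by
  ext a; by_cases h : a ∈ S <;> simp [mem_domf, rankMap, h]

lemma fimg_rankMap (S : Finset (Fin n)) : fimg (rankMap S) S = boldK n #S := by
  refine eq_of_subset_of_card_le (fun x hx => ?_) ?_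
  · obtain ⟨a, ha, hax⟩ := mem_fimg.1 hx
    simp only [rankMap, if_pos ha, Option.some_inj] at hax
    simp only [boldK, mem_filter, mem_univ, true_and, ← hax]
    calc #(S.filter (· < a)) ≤ #(S.erase a) :=
          card_le_card fun z hz => mem_erase.2 ⟨(mem_filter.1 hz).2.ne, (mem_filter.1 hz).1⟩
      _ < #S := card_erase_lt_of_mem ha
  · rw [card_fimg (rankMap_mem_Bn S).1 (domf_rankMap S).ge, card_boldK (card_finset_fin_le S)]

end PartialMaps

section Action

variable {F : Type*} [Field F] {n : ℕ}

@[simp]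
lemma actMap_single (f : Fin n → Option (Fin n)) (S : Finset (Fin n)) (c : F) :
    actMap F f (Finsupp.single S c) =
      if S ⊆ domf f then Finsupp.single (fimg f S) c else 0 := by
  rw [actMap, Finsupp.lsum_single]
  split_ifs <;> simp

lemma actMap_partialId_of_minimal {v : Finset (Fin n) →₀ F} {S : Finset (Fin n)}
    (hS : S ∈ v.support) (hmin : ∀ T ∈ v.support, T ⊆ S → T = S) :
    actMap F (partialId S) v = Finsupp.single S (v S) := by
  rw [actMap, Finsupp.lsum_apply, Finsupp.sum, sum_eq_single_of_mem S hS]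
  · rw [domf_partialId, if_pos subset_rfl, fimg_partialId]
    rfl
  · intro T hT hTS
    rw [domf_partialId, if_neg (mt (hmin T hT) hTS), LinearMap.zero_apply]

lemma IsBnSub.exists_single_mem {W : Submodule F (Finset (Fin n) →₀ F)} (hW : IsBnSub W)
    {v : Finset (Fin n) →₀ F} (hvW : v ∈ W) (hv : v ≠ 0) :
    ∃ S : Finset (Fin n), Finsupp.single S (1 : F) ∈ W := by
  obtain ⟨S, hS, hSmin⟩ := exists_min_image v.support card (Finsupp.support_nonempty_iff.2 hv)
  have hvS : Finsupp.single S (v S) ∈ W := by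
    rw [← actMap_partialId_of_minimal hS fun T hT hTS => eq_of_subset_of_card_le hTS (hSmin T hT)]
    exact hW _ (partialId_mem_Bn S) v hvW
  refine ⟨S, ?_⟩
  simpa [Finsupp.smul_single, inv_mul_cancel₀ (Finsupp.mem_support_iff.1 hS)] using
    W.smul_mem (v S)⁻¹ hvS

lemma IsBnSub.single_boldK_mem {W : Submodule F (Finset (Fin n) →₀ F)} (hW : IsBnSub W)
    {S : Finset (Fin n)} (hS : Finsupp.single S (1 : F) ∈ W) :
    Finsupp.single (boldK n #S) (1 : F) ∈ W := by
  simpa [domf_rankMap, fimg_rankMap] using hW _ (rankMap_mem_Bn S) _ hS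

lemma isBnSub_span_single_boldK (k : ℕ) :
    IsBnSub (Submodule.span F {Finsupp.single (boldK n k) (1 : F)}) := by
  intro f hf v hv
  obtain ⟨c, rfl⟩ := Submodule.mem_span_singleton.1 hv
  rw [map_smul, actMap_single]
  split_ifs with hd
  · rw [fimg_boldK hf.1 hf.2.2 hd]
    exact Submodule.smul_mem _ c (Submodule.mem_span_singleton_self _)
  · simp

end Action

theorem irreducible_submodules_general (n : ℕ) (F : Type*) [Field F]
    (W : Submodule F (Finset (Fin n) →₀ F)) (hW : IsIrred W) :
    Module.finrank F W = 1 ∧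
      ∃ k ≤ n, W = Submodule.span F {Finsupp.single (boldK n k) (1 : F)} := by
  obtain ⟨hsub, hbot, hirr⟩ := hW
  obtain ⟨v, hvW, hv⟩ := Submodule.exists_mem_ne_zero_of_ne_bot hbot
  obtain ⟨S, hS⟩ := hsub.exists_single_mem hvW hv
  have hne : Finsupp.single (boldK n #S) (1 : F) ≠ 0 := Finsupp.single_ne_zero.2 one_ne_zero
  have hUW : Submodule.span F {Finsupp.single (boldK n #S) (1 : F)} = W :=
    (hirr _ (isBnSub_span_single_boldK _)
      ((Submodule.span_singleton_le_iff_mem _ _).2 (hsub.single_boldK_mem hS))).resolve_left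
      (mt Submodule.span_singleton_eq_bot.1 hne)
  exact ⟨hUW ▸ finrank_span_singleton hne, #S, card_finset_fin_le S, hUW.symm⟩

/-- every irreducible `B_n`-submodule of `V` is `1`-dimensional and equals
`F·v_{{1,…,k}}` for some `0 ≤ k ≤ n`. -/
theorem irreducible_submodules (n : ℕ) (F : Type*) [Field F] [CharZero F]
    (W : Submodule F (Finset (Fin n) →₀ F)) (hW : IsIrred W) :
    Module.finrank F W = 1 ∧
      ∃ k ≤ n, W = Submodule.span F {Finsupp.single (boldK n k) (1 : F)} :=
  irreducible_submodules_general n F W hW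
end

section
/- For the k-subset S = {2, 4, ..., 2k} of {1,...,n} (with 2k ≤ n), the number of k-subsets T of {1,...,n} with T ≤ S (componentwise) equals the Catalan number c_{k+1}. -/
open Finset

/-- the componentwise partial order on subsets of `{1,…,n}`: `T ≤ S` iff `|T| = |S|`
and `t_i ≤ s_i` for all `i` where both are listed increasingly. -/
def subLE {n : ℕ} (T S : Finset (Fin n)) : Prop :=
  T.card = S.card ∧ ∀ (i : ℕ) (hT : i < T.card) (hS : i < S.card),
    ((T.orderIsoOfFin rfl ⟨i, hT⟩ : T) : Fin n) ≤ ((S.orderIsoOfFin rfl ⟨i, hS⟩ : S) : Fin n)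

/-!
Listing `T = {t_1 < … < t_k}` increasingly, `t_i ≤ 2i` for all `i` says that `T` has at least `i`
elements in `{1, …, 2i}` for every `i ≤ k`; for `i = k` this forces `T ⊆ {1, …, 2k}`. Reading
`j ∈ T` as an up step and `j ∉ T` as a down step for `j = 1, …, 2k` gives a word `w` in which
every prefix has at most one more down step than up steps, and exactly `k` of each in total.
So `U w D` is a Dyck word of semilength `k + 1`, and every such Dyck word arises from exactly
one `T`.
-/

theorem Finset.orderEmbOfFin_le_iff_lt_card_filter {α : Type*} [LinearOrder α] (s : Finset α)
    {k : ℕ} (h : s.card = k) (i : Fin k) (a : α) :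
    s.orderEmbOfFin h i ≤ a ↔ (i : ℕ) < #{x ∈ s | x ≤ a} := by
  set f := s.orderEmbOfFin h
  have hcard : #{x ∈ s | x ≤ a} = #{j | f j ≤ a} := by
    conv_lhs => rw [← s.image_orderEmbOfFin_univ h]
    rw [filter_image, card_image_of_injective _ f.injective]
  rw [hcard]
  constructor
  · intro hi
    calc (i : ℕ) < #(Iic i) := by simp
      _ ≤ #{j | f j ≤ a} := card_le_card fun j hj => by
          simp only [mem_Iic, mem_filter_univ] at hj ⊢
          exact (f.monotone hj).trans hi
  · intro hi
    by_contra! hlt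
    have : #{j | f j ≤ a} ≤ #(Iio i) := card_le_card fun j hj => by
      simp only [mem_Iio, mem_filter_univ] at hj ⊢
      exact f.lt_iff_lt.mp (hj.trans_lt hlt)
    simp only [Fin.card_Iio] at this
    omega

theorem subLE_iff {n m : ℕ} (T S : Finset (Fin n)) (hS : S.card = m) :
    subLE T S ↔ T.card = m ∧ ∀ i : Fin m, (i : ℕ) < #{x ∈ T | x ≤ S.orderEmbOfFin hS i} := by
  subst hS
  simp only [subLE, coe_orderIsoOfFin_apply, Fin.forall_iff]
  refine and_congr_right fun hTS => forall_congr' fun i => ?_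
  constructor
  · intro hle hi
    exact (T.orderEmbOfFin_le_iff_lt_card_filter rfl ⟨i, hTS ▸ hi⟩ _).mp (hle _ hi)
  · intro hlt hT hS
    exact (T.orderEmbOfFin_le_iff_lt_card_filter rfl ⟨i, hT⟩ _).mpr (hlt hS)

theorem subLE_image_iff {n k : ℕ} (T : Finset (Fin n)) {f : Fin k → Fin n} (hf : StrictMono f) :
    subLE T (univ.image f) ↔ T.card = k ∧ ∀ i : Fin k, (i : ℕ) < #{x ∈ T | x ≤ f i} := by
  have hS : (univ.image f).card = k := by
    rw [card_image_of_injective _ hf.injective, card_univ, Fintype.card_fin]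
  rw [subLE_iff T _ hS, ← orderEmbOfFin_unique hS (fun i => mem_image_of_mem f (mem_univ i)) hf]

open DyckStep

section IndicatorWord

variable {A : Finset ℕ} {j m : ℕ}

def indicatorWord (A : Finset ℕ) (m : ℕ) : List DyckStep :=
  (List.range m).map fun j => if j ∈ A then U else D

@[simp]
theorem length_indicatorWord (A : Finset ℕ) (m : ℕ) : (indicatorWord A m).length = m := by
  simp [indicatorWord]

theorem count_U_indicatorWord (A : Finset ℕ) (m : ℕ) :
    (indicatorWord A m).count U = #{a ∈ A | a < m} := by
  induction m with
  | zero => simp [indicatorWord]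
  | succ m ih =>
    have hsplit : {a ∈ A | a < m + 1} = {a ∈ A | a < m} ∪ {a ∈ A | a = m} := by
      simp_rw [Nat.lt_succ_iff_lt_or_eq, filter_or]
    rw [hsplit, card_union_of_disjoint (disjoint_filter.mpr fun _ _ h => h.ne), ← ih]
    by_cases hm : m ∈ A <;> simp [indicatorWord, List.range_succ, hm, filter_eq']

theorem count_U_indicatorWord_eq_card (hA : ∀ a ∈ A, a < m) :
    (indicatorWord A m).count U = #A := by
  rw [count_U_indicatorWord, filter_true_of_mem hA]

theorem count_U_add_count_D_indicatorWord (A : Finset ℕ) (m : ℕ) :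
    (indicatorWord A m).count U + (indicatorWord A m).count D = m := by
  induction m with
  | zero => simp [indicatorWord]
  | succ m ih =>
    by_cases hm : m ∈ A <;> simp [indicatorWord, List.range_succ, hm] at ih ⊢ <;> omega

theorem take_indicatorWord (A : Finset ℕ) (hj : j ≤ m) :
    (indicatorWord A m).take j = indicatorWord A j := by
  rw [indicatorWord, ← List.map_take, List.take_range, min_eq_left hj, indicatorWord]

theorem take_succ_cons_indicatorWord_append (A : Finset ℕ) (hj : j ≤ m) :
    (U :: (indicatorWord A m ++ [D])).take (j + 1) = U :: indicatorWord A j := by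
  rw [List.take_succ_cons, List.take_append_of_le_length (by simpa), take_indicatorWord A hj]

def upSet (L : List DyckStep) : Finset ℕ := {j ∈ range L.length | L[j]? = some U}

theorem lt_length_of_mem_upSet {L : List DyckStep} (hj : j ∈ upSet L) : j < L.length :=
  mem_range.mp (mem_filter.mp hj).1

theorem indicatorWord_upSet (L : List DyckStep) : indicatorWord (upSet L) L.length = L := by
  refine List.ext_getElem (by simp) fun j hj hjL => ?_
  simp only [indicatorWord, upSet, List.getElem_map, List.getElem_range, mem_filter, mem_range,
    hjL, true_and, List.getElem?_eq_getElem hjL, Option.some.injEq]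
  rcases L[j].dichotomy with h | h <;> simp [h]

theorem upSet_indicatorWord (hA : ∀ a ∈ A, a < m) : upSet (indicatorWord A m) = A := by
  ext j
  by_cases hj : j < m
  · by_cases hjA : j ∈ A <;> simp [upSet, indicatorWord, hj, hjA]
  · simpa [upSet, hj] using fun h => hj (hA j h)

end IndicatorWord

section Ballot

variable {k : ℕ} {A : Finset ℕ}

/-- The ballot condition on a `k`-subset `A` of `ℕ`: each prefix of length `j ≤ 2k` of its
indicator word has at most one more `D` than `U`. -/
def IsBallot (k : ℕ) (A : Finset ℕ) : Prop :=
  #A = k ∧ ∀ j ≤ 2 * k, j ≤ 2 * #{a ∈ A | a < j} + 1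

theorem forall_lt_card_filter_le_iff (A : Finset ℕ) (k : ℕ) :
    (∀ i < k, i < #{a ∈ A | a ≤ 2 * i + 1}) ↔ ∀ j ≤ 2 * k, j ≤ 2 * #{a ∈ A | a < j} + 1 := by
  constructor
  · intro hA j hj
    obtain ⟨i, hij⟩ := Nat.even_or_odd' j
    rcases i with _ | i
    · omega
    · have : i < #{a ∈ A | a < j} :=
        (hA i (by omega)).trans_le (card_le_card (monotone_filter_right _ fun a ha => by omega))
      omega
  · intro hA i hi
    have h1 := hA (2 * i + 2) (by omega)
    have h2 : #{a ∈ A | a < 2 * i + 2} ≤ #{a ∈ A | a ≤ 2 * i + 1} :=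
      card_le_card (monotone_filter_right _ fun a ha => by omega)
    omega

theorem IsBallot.forall_mem_lt (hA : IsBallot k A) : ∀ a ∈ A, a < 2 * k := by
  refine card_filter_eq_iff.mp (le_antisymm (card_filter_le _ _) ?_)
  have := hA.2 (2 * k) le_rfl
  have := hA.1
  omega

theorem IsBallot.count_U_eq_count_D (hA : IsBallot k A) :
    (U :: (indicatorWord A (2 * k) ++ [D])).count U =
      (U :: (indicatorWord A (2 * k) ++ [D])).count D := by
  have := count_U_indicatorWord_eq_card hA.forall_mem_lt
  have := count_U_add_count_D_indicatorWord A (2 * k)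
  have := hA.1
  simp
  omega

def IsBallot.dyckWord (hA : IsBallot k A) : DyckWord where
  toList := U :: (indicatorWord A (2 * k) ++ [D])
  count_U_eq_count_D := hA.count_U_eq_count_D
  count_D_le_count_U
    | 0 => by simp
    | j + 1 => by
      rcases le_or_gt j (2 * k) with hj | hj
      · rw [take_succ_cons_indicatorWord_append A hj]
        have := hA.2 j hj
        have := count_U_indicatorWord A j
        have := count_U_add_count_D_indicatorWord A j
        simp
        omega
      · rw [List.take_of_length_le (by simp; omega)]
        exact hA.count_U_eq_count_D.ge

theorem IsBallot.semilength_dyckWord (hA : IsBallot k A) : hA.dyckWord.semilength = k + 1 := by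
  simp [DyckWord.semilength, IsBallot.dyckWord, count_U_indicatorWord_eq_card hA.forall_mem_lt,
    hA.1]

theorem isBallot_of_toList_eq (hA : ∀ a ∈ A, a < 2 * k) {p : DyckWord}
    (hp : p.toList = U :: (indicatorWord A (2 * k) ++ [D])) : IsBallot k A := by
  constructor
  · have hbalanced := p.count_U_eq_count_D
    have := count_U_indicatorWord_eq_card hA
    have := count_U_add_count_D_indicatorWord A (2 * k)
    rw [hp] at hbalanced
    simp at hbalanced
    omega
  · intro j hj
    have hprefix := p.count_D_le_count_U (j + 1)
    rw [hp, take_succ_cons_indicatorWord_append A hj] at hprefix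
    have := count_U_indicatorWord A j
    have := count_U_add_count_D_indicatorWord A j
    simp at hprefix
    omega

theorem DyckWord.length_dropLast_tail {p : DyckWord} (hp : p.semilength = k + 1) :
    p.toList.dropLast.tail.length = 2 * k := by
  simp only [List.length_tail, List.length_dropLast, ← p.two_mul_semilength_eq_length, hp]
  omega

theorem DyckWord.toList_eq_cons_indicatorWord_append {p : DyckWord} (hp : p.semilength = k + 1) :
    p.toList = U :: (indicatorWord (upSet p.toList.dropLast.tail) (2 * k) ++ [D]) := by
  have hne : p ≠ 0 := by rintro rfl; simp at hp
  rw [← DyckWord.length_dropLast_tail hp, indicatorWord_upSet, ← List.cons_append,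
    DyckWord.cons_tail_dropLast_concat hne]

def ballotEquivDyckWord (k : ℕ) :
    {A // IsBallot k A} ≃ {p : DyckWord // p.semilength = k + 1} where
  toFun A := ⟨A.2.dyckWord, A.2.semilength_dyckWord⟩
  invFun p := ⟨upSet p.1.toList.dropLast.tail,
    isBallot_of_toList_eq
      (fun _ ha => DyckWord.length_dropLast_tail p.2 ▸ lt_length_of_mem_upSet ha)
      (p.1.toList_eq_cons_indicatorWord_append p.2)⟩
  left_inv A := Subtype.ext <| by
    show upSet (U :: (indicatorWord A.1 (2 * k) ++ [D])).dropLast.tail = A.1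
    rw [← List.cons_append, List.dropLast_concat, List.tail_cons,
      upSet_indicatorWord A.2.forall_mem_lt]
  right_inv p := Subtype.ext <| DyckWord.ext (p.1.toList_eq_cons_indicatorWord_append p.2).symm

end Ballot

theorem subLE_image_iff_isBallot {n k : ℕ} {f : Fin k → Fin n} (hf : ∀ i, (f i : ℕ) = 2 * i + 1)
    (T : Finset (Fin n)) : subLE T (univ.image f) ↔ IsBallot k (T.map Fin.valEmbedding) := by
  have hmono : StrictMono f := fun i j hij => by
    rw [Fin.lt_def, hf, hf]
    exact Nat.succ_lt_succ (Nat.mul_lt_mul_of_pos_left hij two_pos)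
  rw [subLE_image_iff T hmono, IsBallot, card_map, ← forall_lt_card_filter_le_iff, Fin.forall_iff]
  simp only [filter_map, card_map, Function.comp_def, Fin.valEmbedding_apply, Fin.le_def, hf]

def subLEEquivIsBallot {n k : ℕ} (h : 2 * k ≤ n) {f : Fin k → Fin n}
    (hf : ∀ i, (f i : ℕ) = 2 * i + 1) :
    {T : Finset (Fin n) // subLE T (univ.image f)} ≃ {A // IsBallot k A} where
  toFun T := ⟨T.1.map Fin.valEmbedding, (subLE_image_iff_isBallot hf T.1).mp T.2⟩
  invFun A := ⟨A.1.attachFin fun a ha => (A.2.forall_mem_lt a ha).trans_le h, by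
    rw [subLE_image_iff_isBallot hf, map_valEmbedding_attachFin]
    exact A.2⟩
  left_inv T := Subtype.ext <| by ext; simp [Fin.val_inj]
  right_inv A := Subtype.ext <| map_valEmbedding_attachFin _

/-- `Fin k` and `Fin n` are 0-indexed: `2 * i.val + 1` stands for the element `2 (i + 1)` of
`{1, …, n}`. -/
theorem card_below_even (n k : ℕ) (h : 2 * k ≤ n) :
    Nat.card {T : Finset (Fin n) // subLE T
        (Finset.image (fun i : Fin k =>
          (⟨2 * i.val + 1, by have := i.isLt; omega⟩ : Fin n)) Finset.univ)} =
      catalan (k + 1) := by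
  rw [← DyckWord.card_dyckWord_semilength_eq_catalan, ← Nat.card_eq_fintype_card]
  exact Nat.card_congr ((subLEEquivIsBallot h fun _ => rfl).trans (ballotEquivDyckWord k))
end
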